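/- arXiv:chao-dyn/9711016 — 2 statements merged into one kernel-verified Lean document; each statement's English description precedes it below -/
import Mathlib

section
/- The value of the normalized Fourier-transformed form factor F₂(κ) = −2πκ² ∫₀^∞ y J₂(κ√(8πy)) (1 − coth y) dy admits for all κ > 0 the convergent series expansion F₂(κ) = π²κ⁴ ∑_{n≥0} ((−π)^n ζ(n+3)/n!) κ^{2n}, where J₂ is the Bessel function of order 2 and ζ the Riemann zeta function. -/
open MeasureTheory

/-- Bessel function of order 2, via its power series. -/
noncomputable def besselJ2 (x : ℝ) : ℝ :=
  ∑' m : ℕ, (-1) ^ m * (x / 2) ^ (2 * m + 2) / (Nat.factorial m * Nat.factorial (m + 2))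

/-- The Riemann zeta value `ζ(n) = ∑_{j≥1} j^{−n}` (real form). -/
noncomputable def zetaNat (n : ℕ) : ℝ := ∑' j : ℕ, 1 / ((j : ℝ) + 1) ^ n

/-!
With `a = 2πκ²`, the Bessel series gives `y J₂(κ√(8πy)) = ∑ₘ (-1)ᵐ aᵐ⁺¹ yᵐ⁺² / (m! (m+2)!)`, and
`1 - coth y = -2 ∑ⱼ e^{-2(j+1)y}` is a geometric series. Their product is a double series whose
terms have absolutely summable integrals, so it may be integrated term by term. Euler's integral
`∫₀^∞ yᵐ⁺² e^{-2(j+1)y} dy = (m+2)! / (2(j+1))ᵐ⁺³` cancels the `(m+2)!`, and summing over `j`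
produces `ζ(m+3)`.
-/

open Real Set
open scoped Nat

lemma integral_pow_mul_exp_neg_mul_Ioi (n : ℕ) {r : ℝ} (hr : 0 < r) :
    ∫ t in Ioi (0 : ℝ), t ^ n * exp (-(r * t)) = n ! / r ^ (n + 1) := by
  have h := integral_rpow_mul_exp_neg_mul_Ioi (a := n + 1) (by positivity) hr
  simp only [add_sub_cancel_right, rpow_natCast] at h
  rw [h, Gamma_nat_eq_factorial, ← Nat.cast_succ, rpow_natCast, one_div_pow, one_div_mul_eq_div]

lemma integrableOn_pow_mul_exp_neg_mul_Ioi (n : ℕ) {r : ℝ} (hr : 0 < r) :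
    IntegrableOn (fun t : ℝ => t ^ n * exp (-(r * t))) (Ioi 0) := by
  refine (integrableOn_rpow_mul_exp_neg_mul_rpow (s := n) (by linarith [n.cast_nonneg (α := ℝ)])
    zero_lt_one hr).congr_fun (fun t _ => ?_) measurableSet_Ioi
  simp only [rpow_natCast, rpow_one, neg_mul]

lemma summable_one_div_nat_add_one_pow {k : ℕ} (hk : 2 ≤ k) :
    Summable (fun j : ℕ => 1 / ((j : ℝ) + 1) ^ k) := by
  have h := (summable_nat_add_iff 1).mpr (summable_one_div_nat_pow.mpr hk : Summable
    (fun n : ℕ => 1 / (n : ℝ) ^ k))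
  exact_mod_cast h

lemma zetaNat_nonneg (k : ℕ) : 0 ≤ zetaNat k :=
  tsum_nonneg fun _ => by positivity

lemma zetaNat_le_zetaNat {k n : ℕ} (hk : 2 ≤ k) (hkn : k ≤ n) : zetaNat n ≤ zetaNat k :=
  Summable.tsum_le_tsum
    (fun j => one_div_le_one_div_of_le (by positivity)
      (pow_le_pow_right₀ (by linarith [j.cast_nonneg (α := ℝ)]) hkn))
    (summable_one_div_nat_add_one_pow (hk.trans hkn)) (summable_one_div_nat_add_one_pow hk)

lemma summable_pow_mul_zetaNat_div_factorial (b : ℝ) :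
    Summable (fun n : ℕ => b ^ n * zetaNat (n + 3) / n !) := by
  refine Summable.of_norm_bounded ((summable_pow_div_factorial |b|).mul_left (zetaNat 3))
    fun n => ?_
  rw [norm_div, norm_mul, norm_pow, Real.norm_of_nonneg (zetaNat_nonneg _), RCLike.norm_natCast,
    mul_comm, mul_div_assoc, Real.norm_eq_abs]
  gcongr
  exact zetaNat_le_zetaNat (by norm_num) (by omega)

lemma hasSum_one_sub_coth {y : ℝ} (hy : 0 < y) :
    HasSum (fun j : ℕ => -2 * exp (-(2 * (j + 1) * y))) (1 - cosh y / sinh y) := by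
  set r := exp (-(2 * y)) with hr
  have hr1 : r < 1 := exp_lt_one_iff.mpr (by linarith)
  have hterm : ∀ j : ℕ, -2 * exp (-(2 * (j + 1) * y)) = -2 * r * r ^ j := fun j => by
    rw [hr, ← exp_nat_mul, mul_assoc (-2 : ℝ), ← exp_add]; ring_nf
  have hsinh : 0 < exp y - exp (-y) := by
    linarith [exp_lt_exp.mpr (show -y < y by linarith)]
  -- `coth y = (1 + r) / (1 - r)` after multiplying through by `exp (-y)`
  have hcoth : 1 - cosh y / sinh y = -2 * r * (1 - r)⁻¹ := by
    have hE : exp y * exp (-y) = 1 := by rw [← exp_add, add_neg_cancel, exp_zero]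
    have hr' : r = exp (-y) * exp (-y) := by rw [hr, ← exp_add]; ring_nf
    rw [cosh_eq, sinh_eq, hr']
    have h1 : 1 - exp (-y) ^ 2 ≠ 0 := by nlinarith [exp_pos (-y)]
    have h2 := hsinh.ne'
    field_simp
    linear_combination (2 * exp (-y)) * hE
  simp_rw [hterm, hcoth]
  exact (hasSum_geometric_of_lt_one (exp_pos _).le hr1).mul_left _

lemma besselJ2_eq_tsum (x : ℝ) :
    besselJ2 x = ∑' m : ℕ, (-1) ^ m * ((x / 2) ^ 2) ^ (m + 1) / (m ! * (m + 2)!) := by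
  simp_rw [← pow_mul]
  rfl

lemma summable_norm_besselJ2_terms (z : ℝ) :
    Summable (fun m : ℕ => ‖(-1 : ℝ) ^ m * z ^ (m + 1) / (m ! * (m + 2)!)‖) := by
  refine Summable.of_nonneg_of_le (fun _ => norm_nonneg _) (fun m => ?_)
    ((summable_pow_div_factorial |z|).mul_left |z|)
  rw [norm_div, norm_mul, norm_pow, norm_pow, norm_neg, norm_one, one_pow, one_mul,
    Real.norm_eq_abs, pow_succ, norm_mul, RCLike.norm_natCast, RCLike.norm_natCast]
  calc |z| ^ m * |z| / (m ! * (m + 2)! : ℝ) ≤ |z| ^ m * |z| / m ! := by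
        gcongr
        exact le_mul_of_one_le_right (by positivity) (by exact_mod_cast (m + 2).factorial_pos)
    _ = |z| * (|z| ^ m / m !) := by ring

/-- The `(m, j)` term of the product of the Bessel series of `J₂(√(4 a y))` with the geometric
series of `1 - coth y`, times `y`. -/
noncomputable def formFactorTerm (a : ℝ) (p : ℕ × ℕ) (y : ℝ) : ℝ :=
  -2 * (-1) ^ p.1 * a ^ (p.1 + 1) / (p.1 ! * (p.1 + 2)!) *
    (y ^ (p.1 + 2) * exp (-(2 * (p.2 + 1) * y)))

section formFactorTerm

variable (a : ℝ) (p : ℕ × ℕ)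

lemma mul_bessel_series_mul_one_sub_coth_eq_tsum {y : ℝ} (hy : 0 < y) :
    y * (∑' m : ℕ, (-1) ^ m * (a * y) ^ (m + 1) / (m ! * (m + 2)!)) * (1 - cosh y / sinh y) =
      ∑' p : ℕ × ℕ, formFactorTerm a p y := by
  have hgeom := hasSum_one_sub_coth hy
  rw [mul_assoc, ← hgeom.tsum_eq, tsum_mul_tsum_of_summable_norm
    (summable_norm_besselJ2_terms (a * y)) (summable_norm_iff.mpr hgeom.summable), ← tsum_mul_left]
  refine tsum_congr fun q => ?_
  rw [formFactorTerm, mul_pow]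
  ring

lemma integrableOn_formFactorTerm : IntegrableOn (formFactorTerm a p) (Ioi 0) :=
  (integrableOn_pow_mul_exp_neg_mul_Ioi (p.1 + 2) (by positivity)).const_mul _

lemma integral_formFactorTerm :
    ∫ y in Ioi 0, formFactorTerm a p y =
      -(a / 4) * ((-a / 2) ^ p.1 / p.1 !) * (1 / ((p.2 : ℝ) + 1) ^ (p.1 + 3)) := by
  unfold formFactorTerm
  rw [integral_const_mul, integral_pow_mul_exp_neg_mul_Ioi _ (by positivity), mul_pow, div_pow,
    neg_pow a]
  field_simp
  ring

lemma integral_norm_formFactorTerm :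
    ∫ y in Ioi 0, ‖formFactorTerm a p y‖ = ‖∫ y in Ioi 0, formFactorTerm a p y‖ := by
  have hnorm : ∀ y ∈ Ioi (0 : ℝ), ‖formFactorTerm a p y‖ =
      ‖-2 * (-1) ^ p.1 * a ^ (p.1 + 1) / (p.1 ! * (p.1 + 2)! : ℝ)‖ *
        (y ^ (p.1 + 2) * exp (-(2 * (p.2 + 1) * y))) := fun y hy => by
    have : 0 ≤ y ^ (p.1 + 2) * exp (-(2 * (p.2 + 1) * y)) := by
      have := mem_Ioi.mp hy; positivity
    rw [formFactorTerm, norm_mul, Real.norm_of_nonneg this]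
  unfold formFactorTerm at *
  rw [setIntegral_congr_fun measurableSet_Ioi hnorm, integral_const_mul,
    integral_const_mul, norm_mul, Real.norm_of_nonneg (setIntegral_nonneg measurableSet_Ioi
      fun y hy => by have := mem_Ioi.mp hy; positivity)]

lemma summable_integral_norm_formFactorTerm :
    Summable (fun p : ℕ × ℕ => ∫ y in Ioi 0, ‖formFactorTerm a p y‖) := by
  simp_rw [integral_norm_formFactorTerm, integral_formFactorTerm]
  refine Summable.of_nonneg_of_le (fun _ => norm_nonneg _) (fun p => ?_)
    (((summable_pow_div_factorial (|a| / 2)).mul_left (|a| / 4)).mul_of_nonneg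
      (summable_one_div_nat_add_one_pow le_rfl) (fun _ => by positivity) (fun _ => by positivity))
  have hj : (1 : ℝ) ≤ p.2 + 1 := by linarith [p.2.cast_nonneg (α := ℝ)]
  simp only [norm_mul, norm_neg, norm_div, norm_pow, Real.norm_eq_abs, abs_one, abs_two,
    Nat.abs_cast, abs_of_pos (zero_lt_one.trans_le hj), abs_of_pos (four_pos (α := ℝ))]
  gcongr
  omega

lemma integral_mul_bessel_series_mul_one_sub_coth :
    ∫ y in Ioi 0, y * (∑' m : ℕ, (-1) ^ m * (a * y) ^ (m + 1) / (m ! * (m + 2)!)) *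
        (1 - cosh y / sinh y) =
      -(a / 4) * ∑' m : ℕ, (-a / 2) ^ m * zetaNat (m + 3) / m ! := by
  have hsummable : Summable (fun p : ℕ × ℕ => ∫ y in Ioi 0, formFactorTerm a p y) :=
    (summable_integral_norm_formFactorTerm a).of_norm_bounded
      fun p => norm_integral_le_integral_norm _
  calc _ = ∫ y in Ioi 0, ∑' p : ℕ × ℕ, formFactorTerm a p y :=
        setIntegral_congr_fun measurableSet_Ioi
          fun y hy => mul_bessel_series_mul_one_sub_coth_eq_tsum a hy
    _ = ∑' p : ℕ × ℕ, ∫ y in Ioi 0, formFactorTerm a p y :=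
        integral_tsum_of_summable_integral_norm (integrableOn_formFactorTerm a)
          (summable_integral_norm_formFactorTerm a) |>.symm
    _ = ∑' m : ℕ, ∑' j : ℕ, ∫ y in Ioi 0, formFactorTerm a (m, j) y := hsummable.tsum_prod
    _ = ∑' m : ℕ, -(a / 4) * ((-a / 2) ^ m * zetaNat (m + 3) / m !) := tsum_congr fun m => by
      simp_rw [integral_formFactorTerm, tsum_mul_left, zetaNat]
      ring
    _ = _ := tsum_mul_left

end formFactorTerm

theorem form_factor_series_general (κ : ℝ) :
    Summable (fun n : ℕ => (-Real.pi) ^ n * zetaNat (n + 3) / (Nat.factorial n) * κ ^ (2 * n)) ∧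
    -2 * Real.pi * κ ^ 2 *
        ∫ y in Set.Ioi (0:ℝ),
          y * besselJ2 (κ * Real.sqrt (8 * Real.pi * y)) * (1 - Real.cosh y / Real.sinh y)
      = Real.pi ^ 2 * κ ^ 4 *
          ∑' n : ℕ, (-Real.pi) ^ n * zetaNat (n + 3) / (Nat.factorial n) * κ ^ (2 * n) := by
  have hseries : (fun n : ℕ => (-π) ^ n * zetaNat (n + 3) / n ! * κ ^ (2 * n)) =
      fun n => (-(2 * π * κ ^ 2) / 2) ^ n * zetaNat (n + 3) / n ! := by
    funext n
    ring
  have hbessel : ∀ y ∈ Ioi (0 : ℝ), y * besselJ2 (κ * √(8 * π * y)) * (1 - cosh y / sinh y) =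
      y * (∑' m : ℕ, (-1) ^ m * (2 * π * κ ^ 2 * y) ^ (m + 1) / (m ! * (m + 2)!)) *
        (1 - cosh y / sinh y) := fun y hy => by
    have hx : (κ * √(8 * π * y) / 2) ^ 2 = 2 * π * κ ^ 2 * y := by
      rw [div_pow, mul_pow, sq_sqrt (by have := mem_Ioi.mp hy; positivity)]
      ring
    rw [besselJ2_eq_tsum, hx]
  refine ⟨hseries ▸ summable_pow_mul_zetaNat_div_factorial _, ?_⟩
  rw [setIntegral_congr_fun measurableSet_Ioi hbessel, integral_mul_bessel_series_mul_one_sub_coth,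
    hseries]
  ring

/-- The form factor `F₂(κ) = −2πκ² ∫₀^∞ y J₂(κ√(8πy)) (1 − coth y) dy` admits,
for all `κ > 0`, the convergent series expansion
`F₂(κ) = π²κ⁴ ∑_{n≥0} ((−π)^n ζ(n+3)/n!) κ^{2n}`. -/
theorem form_factor_series (κ : ℝ) (hκ : 0 < κ) :
    Summable (fun n : ℕ => (-Real.pi) ^ n * zetaNat (n + 3) / (Nat.factorial n) * κ ^ (2 * n)) ∧
    -2 * Real.pi * κ ^ 2 *
        ∫ y in Set.Ioi (0:ℝ),
          y * besselJ2 (κ * Real.sqrt (8 * Real.pi * y)) * (1 - Real.cosh y / Real.sinh y)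
      = Real.pi ^ 2 * κ ^ 4 *
          ∑' n : ℕ, (-Real.pi) ^ n * zetaNat (n + 3) / (Nat.factorial n) * κ ^ (2 * n) :=
  form_factor_series_general κ
end

section
/- Let Λ ⊂ ℝ² be a lattice of covolume N with minimal basis [V₁, V₂] (so |V₁| ≤ |V₂|, |V₁·V₂| ≤ |V₁|²/2, |det(V₁,V₂)| = N), and suppose |V₁|² ≥ C²N for some C > 0. Then |V₂|² ≤ N(C²/4 + 1/C²), and the circumradius R of the Dirichlet–Voronoi cell of Λ at the origin satisfies R² ≤ (N/4)·max(5/2, C² + 1/C²). -/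
/-!
Write `a = |V₁|²`, `b = |V₂|²`, `p = V₁·V₂`. Reduction and the covolume give `2|p| ≤ a ≤ b` and
`ab - p² = N²`, hence `ab ≤ N² + a²/4` and `3a² ≤ 4N²`. Both estimates then come down to the fact
that `t ↦ t + K/t` is at most its value at `s` on `[s, K/s]`; for the first, `|V₂|² ≤ (a + 4N²/a)/4`.

A point `x` of the cell satisfies `|2x·v| ≤ |v|²` for `v = V₁, V₂, V₁ ± V₂`, a hexagon in the
coordinates `u = 2x·V₁`, `w = 2x·V₂`. There `4N²|x|² = bu² - 2puw + aw²` is at most its value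
`ab(a + b - 2|p|)` at a vertex (the circumradius formula for the triangle spanned by the basis),
and `ab(a + b - 2|p|) ≤ N²(a + N²/a)`. Finally `a + N²/a ≤ 5N/2` when `a ≥ N/2`, and
`a + N²/a ≤ N(C² + 1/C²)` when `C²N ≤ a ≤ N/2`.
-/

theorem add_div_le_add_div_of_mul_le {s t K : ℝ} (hs : 0 < s) (hst : s ≤ t) (hK : s * t ≤ K) :
    t + K / t ≤ s + K / s := by
  have ht : 0 < t := hs.trans_le hst
  have hdiff : s + K / s - (t + K / t) = (t - s) * (K - s * t) / (s * t) := by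
    field_simp
    ring
  have : 0 ≤ (t - s) * (K - s * t) / (s * t) := by
    apply div_nonneg (mul_nonneg (by linarith) (by linarith)) (by positivity)
  linarith

section ReducedGram

variable {a b p u w N C : ℝ}

theorem three_mul_sq_le_of_reduced (hred : |p| ≤ a / 2) (hab : a ≤ b)
    (hdet : a * b - p ^ 2 = N ^ 2) : 3 * a ^ 2 ≤ 4 * N ^ 2 := by
  have ha : 0 ≤ a := by linarith [abs_nonneg p]
  nlinarith [sq_abs p, abs_nonneg p]

theorem le_of_reduced_of_sq_mul_le (hN : 0 < N) (hC : 0 < C) (hred : |p| ≤ a / 2) (hab : a ≤ b)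
    (hdet : a * b - p ^ 2 = N ^ 2) (hlow : C ^ 2 * N ≤ a) :
    b ≤ N * (C ^ 2 / 4 + 1 / C ^ 2) := by
  have hs : 0 < C ^ 2 * N := by positivity
  have ha : 0 < a := hs.trans_le hlow
  have h3 := three_mul_sq_le_of_reduced hred hab hdet
  have hb : b ≤ (a + 4 * N ^ 2 / a) / 4 := by
    rw [le_div_iff₀ (by norm_num), ← sub_nonneg]
    have : a + 4 * N ^ 2 / a - b * 4 = (a ^ 2 + 4 * N ^ 2 - 4 * a * b) / a := by
      field_simp
    rw [this]
    apply div_nonneg _ ha.le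
    nlinarith [sq_abs p, abs_nonneg p]
  calc b ≤ (a + 4 * N ^ 2 / a) / 4 := hb
    _ ≤ (C ^ 2 * N + 4 * N ^ 2 / (C ^ 2 * N)) / 4 := by
      refine div_le_div_of_nonneg_right (add_div_le_add_div_of_mul_le hs hlow ?_) (by norm_num)
      nlinarith [mul_le_mul_of_nonneg_right hlow ha.le]
    _ = N * (C ^ 2 / 4 + 1 / C ^ 2) := by
      field_simp

theorem mul_mul_add_sub_le_of_reduced (hN : 0 < N) (hred : |p| ≤ a / 2) (hab : a ≤ b)
    (hdet : a * b - p ^ 2 = N ^ 2) :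
    a * b * (a + b - 2 * |p|) ≤ N ^ 2 * (a + N ^ 2 / a) := by
  have ha : 0 < a := by nlinarith [abs_nonneg p, sq_nonneg p]
  have h3 := three_mul_sq_le_of_reduced hred hab hdet
  have hq := abs_nonneg p
  have hgram : a * b = N ^ 2 + |p| ^ 2 := by rw [sq_abs]; linarith
  have hfactor : N ^ 2 * (a ^ 2 + N ^ 2) - a * (a * b * (a + b - 2 * |p|))
      = |p| * (a - |p|) * (2 * N ^ 2 - |p| * (a - |p|)) := by
    linear_combination (-(a ^ 2 - 2 * a * |p| + a * b + N ^ 2 + |p| ^ 2)) * hgram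
  have hnonneg : 0 ≤ |p| * (a - |p|) * (2 * N ^ 2 - |p| * (a - |p|)) :=
    mul_nonneg (mul_nonneg hq (by linarith))
      (by nlinarith [sq_nonneg (a - 2 * |p|)])
  have key : a * (a * b * (a + b - 2 * |p|)) ≤ N ^ 2 * (a ^ 2 + N ^ 2) := by linarith
  rw [← le_div_iff₀' ha] at key
  calc _ ≤ _ := key
    _ = N ^ 2 * (a + N ^ 2 / a) := by field_simp

theorem add_sq_div_le_mul_max (hN : 0 < N) (hC : 0 < C) (hlow : C ^ 2 * N ≤ a) (ha : a ≤ 2 * N) :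
    a + N ^ 2 / a ≤ N * max (5 / 2) (C ^ 2 + 1 / C ^ 2) := by
  rcases le_total (N / 2) a with h | h
  · calc a + N ^ 2 / a ≤ N / 2 + N ^ 2 / (N / 2) :=
          add_div_le_add_div_of_mul_le (by positivity) h (by nlinarith)
      _ = N * (5 / 2) := by field_simp; norm_num
      _ ≤ _ := by gcongr; exact le_max_left _ _
  · calc a + N ^ 2 / a ≤ C ^ 2 * N + N ^ 2 / (C ^ 2 * N) :=
          add_div_le_add_div_of_mul_le (by positivity) hlow
            (by
              have ha₀ : 0 ≤ a := (by positivity : (0:ℝ) ≤ C ^ 2 * N).trans hlow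
              nlinarith [mul_le_mul hlow h ha₀ ha₀])
      _ = N * (C ^ 2 + 1 / C ^ 2) := by field_simp
      _ ≤ _ := by gcongr; exact le_max_right _ _

theorem quadForm_le_of_abs_le (hu : |u| ≤ a) (hw : |w| ≤ b)
    (hadd : |u + w| ≤ a + b + 2 * p) (hsub : |u - w| ≤ a + b - 2 * p) :
    b * u ^ 2 - 2 * p * u * w + a * w ^ 2 ≤ a * b * (a + b - 2 * |p|) := by
  wlog hp : p ≤ 0 generalizing p w
  · have h := this (p := -p) (w := -w) (by rwa [abs_neg])
      (by rw [← sub_eq_add_neg]; linarith) (by rw [sub_neg_eq_add]; linarith) (by linarith)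
    rw [abs_neg] at h
    linarith
  rw [abs_of_nonpos hp]
  obtain ⟨hu₁, hu₂⟩ := abs_le.mp hu
  obtain ⟨hw₁, hw₂⟩ := abs_le.mp hw
  obtain ⟨hs₁, hs₂⟩ := abs_le.mp hadd
  have hua : 0 ≤ a - u := by linarith
  have hua' : 0 ≤ a + u := by linarith
  have hwb : 0 ≤ b - w := by linarith
  have hwb' : 0 ≤ b + w := by linarith
  -- the maximum over the hexagon is attained at its vertices `±(a, b - 2|p|)`, `±(a - 2|p|, b)`
  rcases le_total 0 (u + w) with h | h
  · have hs : 0 ≤ a + b + 2 * p - (u + w) := by linarith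
    nlinarith [mul_nonneg (mul_nonneg hs hua) hwb, mul_nonneg (mul_nonneg hs hua') hwb',
      mul_nonneg (mul_nonneg hua hwb) h]
  · have hs : 0 ≤ a + b + 2 * p + (u + w) := by linarith
    nlinarith [mul_nonneg (mul_nonneg hs hua) hwb, mul_nonneg (mul_nonneg hs hua') hwb',
      mul_nonneg (mul_nonneg hua' hwb') (neg_nonneg.2 h)]

end ReducedGram

namespace Plane

def dot (x y : ℝ × ℝ) : ℝ := x.1 * y.1 + x.2 * y.2

def normSq (x : ℝ × ℝ) : ℝ := x.1 ^ 2 + x.2 ^ 2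

def cross (x y : ℝ × ℝ) : ℝ := x.1 * y.2 - x.2 * y.1

def voronoiCell (V₁ V₂ : ℝ × ℝ) : Set (ℝ × ℝ) :=
  {x | ∀ m n : ℤ, x.1 ^ 2 + x.2 ^ 2 ≤
    (x.1 - (m * V₁.1 + n * V₂.1)) ^ 2 + (x.2 - (m * V₁.2 + n * V₂.2)) ^ 2}

theorem normSq_mul_normSq_sub_dot_sq (x y : ℝ × ℝ) :
    normSq x * normSq y - dot x y ^ 2 = cross x y ^ 2 := by
  unfold normSq dot cross
  ring

-- inverting the Gram matrix recovers `x` from `x·V₁` and `x·V₂`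
theorem cross_sq_mul_normSq (x V₁ V₂ : ℝ × ℝ) :
    cross V₁ V₂ ^ 2 * normSq x =
      normSq V₂ * dot x V₁ ^ 2 - 2 * dot V₁ V₂ * dot x V₁ * dot x V₂ + normSq V₁ * dot x V₂ ^ 2 := by
  unfold normSq dot cross
  ring

variable {x V₁ V₂ : ℝ × ℝ}

theorem two_mul_dot_le_of_mem_voronoiCell (hx : x ∈ voronoiCell V₁ V₂) (m n : ℤ) :
    2 * (m * dot x V₁ + n * dot x V₂) ≤
      m ^ 2 * normSq V₁ + 2 * m * n * dot V₁ V₂ + n ^ 2 * normSq V₂ := by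
  unfold normSq dot
  linear_combination hx m n

theorem abs_two_mul_dot_le_of_mem_voronoiCell (hx : x ∈ voronoiCell V₁ V₂) (m n : ℤ) :
    |2 * (m * dot x V₁ + n * dot x V₂)| ≤
      m ^ 2 * normSq V₁ + 2 * m * n * dot V₁ V₂ + n ^ 2 * normSq V₂ := by
  have h := two_mul_dot_le_of_mem_voronoiCell hx (-m) (-n)
  push_cast at h
  exact abs_le.mpr ⟨by linarith, two_mul_dot_le_of_mem_voronoiCell hx m n⟩

theorem four_mul_cross_sq_mul_normSq_le_of_mem_voronoiCell (hx : x ∈ voronoiCell V₁ V₂) :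
    4 * cross V₁ V₂ ^ 2 * normSq x ≤
      normSq V₁ * normSq V₂ * (normSq V₁ + normSq V₂ - 2 * |dot V₁ V₂|) := by
  have h := abs_two_mul_dot_le_of_mem_voronoiCell hx
  have hQ := quadForm_le_of_abs_le (p := dot V₁ V₂) (u := 2 * dot x V₁) (w := 2 * dot x V₂)
    (by simpa using h 1 0) (by simpa using h 0 1)
    (by convert h 1 1 using 1 <;> push_cast <;> ring_nf)
    (by convert h 1 (-1) using 1 <;> push_cast <;> ring_nf)
  rw [mul_assoc, cross_sq_mul_normSq]
  linarith

end Plane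

/-- Let `Λ ⊂ ℝ²` be the lattice generated by a minimal basis `[V₁, V₂]` of
covolume `N` with `|V₁| ≤ |V₂|`, `|V₁·V₂| ≤ |V₁|²/2`, and `|V₁|² ≥ C²N`.  Then
`|V₂|² ≤ N(C²/4 + 1/C²)` and the circumradius `R` of the Dirichlet–Voronoi
cell at the origin satisfies `R² ≤ (N/4) max(5/2, C² + 1/C²)`. -/
theorem voronoi_cell_radius_bound (N C : ℝ) (hN : 0 < N) (hC : 0 < C)
    (V₁ V₂ : ℝ × ℝ)
    (h12 : V₁.1 ^ 2 + V₁.2 ^ 2 ≤ V₂.1 ^ 2 + V₂.2 ^ 2)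
    (hred : |V₁.1 * V₂.1 + V₁.2 * V₂.2| ≤ (V₁.1 ^ 2 + V₁.2 ^ 2) / 2)
    (hdet : |V₁.1 * V₂.2 - V₁.2 * V₂.1| = N)
    (hlow : C ^ 2 * N ≤ V₁.1 ^ 2 + V₁.2 ^ 2) :
    (V₂.1 ^ 2 + V₂.2 ^ 2 ≤ N * (C ^ 2 / 4 + 1 / C ^ 2)) ∧
    (∀ x : ℝ × ℝ,
      (∀ m n : ℤ, x.1 ^ 2 + x.2 ^ 2 ≤
        (x.1 - ((m : ℝ) * V₁.1 + (n : ℝ) * V₂.1)) ^ 2 +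
        (x.2 - ((m : ℝ) * V₁.2 + (n : ℝ) * V₂.2)) ^ 2) →
      x.1 ^ 2 + x.2 ^ 2 ≤ N / 4 * max (5 / 2) (C ^ 2 + 1 / C ^ 2)) := by
  have hcross : Plane.cross V₁ V₂ ^ 2 = N ^ 2 := by rw [← hdet, sq_abs]; rfl
  have hgram : Plane.normSq V₁ * Plane.normSq V₂ - Plane.dot V₁ V₂ ^ 2 = N ^ 2 := by
    rw [Plane.normSq_mul_normSq_sub_dot_sq, hcross]
  refine ⟨le_of_reduced_of_sq_mul_le hN hC hred h12 hgram hlow, fun x hx => ?_⟩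
  have hR := Plane.four_mul_cross_sq_mul_normSq_le_of_mem_voronoiCell hx
  rw [hcross] at hR
  have h2N : V₁.1 ^ 2 + V₁.2 ^ 2 ≤ 2 * N := by
    nlinarith [three_mul_sq_le_of_reduced hred h12 hgram]
  have : 4 * N ^ 2 * (x.1 ^ 2 + x.2 ^ 2) ≤ 4 * N ^ 2 * (N / 4 * max (5 / 2) (C ^ 2 + 1 / C ^ 2)) :=
    calc 4 * N ^ 2 * (x.1 ^ 2 + x.2 ^ 2) ≤ _ := hR
      _ ≤ N ^ 2 * (_ + N ^ 2 / _) := mul_mul_add_sub_le_of_reduced hN hred h12 hgram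
      _ ≤ N ^ 2 * (N * max (5 / 2) (C ^ 2 + 1 / C ^ 2)) := by
        gcongr
        exact add_sq_div_le_mul_max hN hC hlow h2N
      _ = _ := by ring
  exact le_of_mul_le_mul_left this (by positivity)
end
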